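/- arXiv:math/0103111 — 3 statements merged into one kernel-verified Lean document; each statement's English description precedes it below -/
import Mathlib

section
/- Let g ≥ 2 and 1 ≤ k ≤ g−1. The endomorphism ψ_k of the free group F_{2g} defined on generators by ψ_k(α_m) = α_{k+1} α_m α_{k+1}⁻¹ and ψ_k(β_m) = α_{k+1} β_m α_{k+1}⁻¹ for m ∉ {k, k+1}, ψ_k(α_k) = α_{k+1} α_k, ψ_k(β_k) = β_k, ψ_k(α_{k+1}) = β_k α_{k+1} β_k⁻¹, and ψ_k(β_{k+1}) = α_{k+1} β_{k+1} α_{k+1}⁻¹ β_k⁻¹, is an automorphism of F_{2g}, and it satisfies ψ_k(R) = α_{k+1} R α_{k+1}⁻¹. -/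
/-- The generator `α_{m+1}` of the free group `F_{2g}`. -/
def genA (g : ℕ) (m : Fin g) : FreeGroup (Fin g ⊕ Fin g) := FreeGroup.of (Sum.inl m)

/-- The generator `β_{m+1}` of the free group `F_{2g}`. -/
def genB (g : ℕ) (m : Fin g) : FreeGroup (Fin g ⊕ Fin g) := FreeGroup.of (Sum.inr m)

open scoped commutatorElement

/-- The surface relation `R = [α₁,β₁]⋯[α_g,β_g]`. -/
def surfaceRel (g : ℕ) : FreeGroup (Fin g ⊕ Fin g) :=
  (List.ofFn fun m : Fin g => ⁅genA g m, genB g m⁆).prod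

/-
`ψ_k` sends `w = β_k⁻¹ α_{k+1} β_k` to `α_{k+1}`, so it has the explicit inverse `psiInv`:
conjugation by `w⁻¹` away from the handles `k`, `k + 1`, corrected on those two handles.
On the relation, `ψ_k [α_m, β_m] = u_m [α_m, β_m] u_{m+1}⁻¹` with `u_m = α_{k+1}` except
`u_{k+1} = β_k α_{k+1} β_k⁻¹`, so the image of `R` telescopes to `α_{k+1} R α_{k+1}⁻¹`.
-/

open FreeGroup Sum

theorem List.prod_ofFn_telescope {G : Type*} [Group G] (u : ℕ → G) :
    ∀ {n : ℕ} (c : Fin n → G),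
      (List.ofFn fun m : Fin n => u m * c m * (u (m + 1))⁻¹).prod =
        u 0 * (List.ofFn c).prod * (u n)⁻¹
  | 0, c => by simp
  | n + 1, c => by
    simp only [List.ofFn_succ', List.prod_concat, Fin.val_castSucc, Fin.val_last,
      prod_ofFn_telescope u (fun m => c m.castSucc)]
    group

theorem FreeGroup.bijective_of_comp_of {α : Type*} {ψ φ : FreeGroup α →* FreeGroup α}
    (h₁ : ∀ x, ψ (φ (of x)) = of x) (h₂ : ∀ x, φ (ψ (of x)) = of x) : Function.Bijective ψ :=
  (ψ.toMulEquiv φ (ext_hom _ _ h₂) (ext_hom _ _ h₁)).bijective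

section
variable {ι : Type*}

/-- `ψ` is the paper's `ψ_k`, the handles `k` and `k + 1` being indexed by `a` and `b`, with
`α_m = of (inl m)` and `β_m = of (inr m)`. -/
structure IsPsi (a b : ι) (ψ : FreeGroup (ι ⊕ ι) →* FreeGroup (ι ⊕ ι)) : Prop where
  map_inl_of_ne : ∀ m, m ≠ a → m ≠ b →
    ψ (of (inl m)) = of (inl b) * of (inl m) * (of (inl b))⁻¹
  map_inr_of_ne : ∀ m, m ≠ a → m ≠ b →
    ψ (of (inr m)) = of (inl b) * of (inr m) * (of (inl b))⁻¹
  map_inl_left : ψ (of (inl a)) = of (inl b) * of (inl a)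
  map_inr_left : ψ (of (inr a)) = of (inr a)
  map_inl_right : ψ (of (inl b)) = of (inr a) * of (inl b) * (of (inr a))⁻¹
  map_inr_right : ψ (of (inr b)) =
    of (inl b) * of (inr b) * (of (inl b))⁻¹ * (of (inr a))⁻¹

variable [DecidableEq ι]

def psiInv (a b : ι) : FreeGroup (ι ⊕ ι) →* FreeGroup (ι ⊕ ι) :=
  let w := (of (inr a))⁻¹ * of (inl b) * of (inr a)
  lift <| Sum.elim
    (fun m => if m = a then w⁻¹ * of (inl a) else if m = b then w else w⁻¹ * of (inl m) * w)
    (fun m => if m = a then of (inr a) else if m = b then w⁻¹ * of (inr b) * of (inr a) * w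
      else w⁻¹ * of (inr m) * w)

namespace IsPsi
variable {a b : ι} {ψ : FreeGroup (ι ⊕ ι) →* FreeGroup (ι ⊕ ι)}

theorem bijective (h : IsPsi a b ψ) (hab : a ≠ b) : Function.Bijective ψ := by
  refine bijective_of_comp_of (φ := psiInv a b) ?_ ?_ <;>
  · rintro (m | m) <;> obtain rfl | hma := eq_or_ne m a <;> obtain rfl | hmb := eq_or_ne m b <;>
      first
      | exact absurd rfl hab
      | simp [psiInv, h.map_inl_of_ne, h.map_inr_of_ne, h.map_inl_left, h.map_inr_left,
          h.map_inl_right, h.map_inr_right, hab.symm, *] <;> group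

theorem map_commutator (h : IsPsi a b ψ) (hab : a ≠ b) (m : ι) :
    ψ ⁅(of (inl m) : FreeGroup (ι ⊕ ι)), of (inr m)⁆ =
      (if m = b then of (inr a) * of (inl b) * (of (inr a))⁻¹ else of (inl b)) *
        ⁅(of (inl m) : FreeGroup (ι ⊕ ι)), of (inr m)⁆ *
        (if m = a then of (inr a) * of (inl b) * (of (inr a))⁻¹ else of (inl b))⁻¹ := by
  rcases eq_or_ne m a with rfl | hma
  · simp [commutatorElement_def, h.map_inl_left, h.map_inr_left, hab]; group
  rcases eq_or_ne m b with rfl | hmb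
  · simp [commutatorElement_def, h.map_inl_right, h.map_inr_right, hma]; group
  · simp [commutatorElement_def, h.map_inl_of_ne m hma hmb, h.map_inr_of_ne m hma hmb, hma, hmb]
    group

end IsPsi
end

theorem IsPsi.map_surfaceRel {g : ℕ} {a b : Fin g} (hab : (a : ℕ) + 1 = b)
    {ψ : FreeGroup (Fin g ⊕ Fin g) →* FreeGroup (Fin g ⊕ Fin g)} (h : IsPsi a b ψ) :
    ψ (surfaceRel g) = genA g b * surfaceRel g * (genA g b)⁻¹ := by
  let u : ℕ → FreeGroup (Fin g ⊕ Fin g) := fun n =>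
    if n = b then genB g a * genA g b * (genB g a)⁻¹ else genA g b
  have hu : ∀ m : Fin g,
      ψ ⁅genA g m, genB g m⁆ = u m * ⁅genA g m, genB g m⁆ * (u (m + 1))⁻¹ := by
    intro m
    have hm : (m : ℕ) + 1 = b ↔ m = a := by rw [← hab, Nat.add_right_cancel_iff, Fin.val_inj]
    simp only [u, hm, Fin.val_inj]
    exact h.map_commutator (Fin.ne_of_lt (by omega)) m
  have hu0 : u 0 = genA g b := if_neg (by omega)
  have hug : u g = genA g b := if_neg (by omega)
  rw [surfaceRel, map_list_prod, List.map_ofFn, Function.comp_def, funext hu,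
    List.prod_ofFn_telescope, hu0, hug]

/-- `α_m` (`1 ≤ m ≤ g`) is `genA g ⟨m - 1, _⟩`, so `α_{k+1}` is `genA g ⟨k, _⟩`;
similarly for `β_m`. -/
theorem psi_k_is_automorphism_and_conjugates_R
    (g k : ℕ) (hk1 : 1 ≤ k) (hk2 : k ≤ g - 1)
    (ψ : FreeGroup (Fin g ⊕ Fin g) →* FreeGroup (Fin g ⊕ Fin g))
    (hαm : ∀ m : Fin g, (m : ℕ) ≠ k - 1 → (m : ℕ) ≠ k →
      ψ (genA g m) = genA g ⟨k, by omega⟩ * genA g m * (genA g ⟨k, by omega⟩)⁻¹)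
    (hβm : ∀ m : Fin g, (m : ℕ) ≠ k - 1 → (m : ℕ) ≠ k →
      ψ (genB g m) = genA g ⟨k, by omega⟩ * genB g m * (genA g ⟨k, by omega⟩)⁻¹)
    (hαk : ψ (genA g ⟨k - 1, by omega⟩) = genA g ⟨k, by omega⟩ * genA g ⟨k - 1, by omega⟩)
    (hβk : ψ (genB g ⟨k - 1, by omega⟩) = genB g ⟨k - 1, by omega⟩)
    (hαk1 : ψ (genA g ⟨k, by omega⟩) =
      genB g ⟨k - 1, by omega⟩ * genA g ⟨k, by omega⟩ * (genB g ⟨k - 1, by omega⟩)⁻¹)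
    (hβk1 : ψ (genB g ⟨k, by omega⟩) =
      genA g ⟨k, by omega⟩ * genB g ⟨k, by omega⟩ * (genA g ⟨k, by omega⟩)⁻¹ *
        (genB g ⟨k - 1, by omega⟩)⁻¹) :
    Function.Bijective ψ ∧
      ψ (surfaceRel g) = genA g ⟨k, by omega⟩ * surfaceRel g * (genA g ⟨k, by omega⟩)⁻¹ := by
  have hψ : IsPsi (⟨k - 1, by omega⟩ : Fin g) ⟨k, by omega⟩ ψ :=
    { map_inl_of_ne := fun m ha hb => hαm m (Fin.val_ne_of_ne ha) (Fin.val_ne_of_ne hb)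
      map_inr_of_ne := fun m ha hb => hβm m (Fin.val_ne_of_ne ha) (Fin.val_ne_of_ne hb)
      map_inl_left := hαk
      map_inr_left := hβk
      map_inl_right := hαk1
      map_inr_right := hβk1 }
  exact ⟨hψ.bijective (Fin.ne_of_lt (Fin.mk_lt_mk.mpr (by omega))),
    hψ.map_surfaceRel (Nat.sub_add_cancel hk1)⟩
end

section
/- Let M = ℤζ + ℤi + ℤj + ℤk ⊆ H_ℚ, where ζ = (1 + i + j + k)/2. There is no element m ∈ M such that the four elements m, i·m, j·m, k·m form a ℤ-basis of M; in particular M is not a free module of rank one over the ring H_ℤ = ℤ + ℤi + ℤj + ℤk (the Lipschitz order), which acts on M by left multiplication. -/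
/-! Left multiplication by `ζ` preserves `M` (which is the Hurwitz order). If `M = H_ℤ · m` with
`m ≠ 0`, then `ζ m = h m` for some `h ∈ H_ℤ`; cancelling `m` in the division algebra `H_ℚ` gives
`ζ = h`, which is impossible because `ζ` has real part `1/2`. -/

open scoped Quaternion

/-- The element `i` of the rational quaternion algebra. -/
def qI : ℍ[ℚ, -1, -1] := ⟨0, 1, 0, 0⟩

/-- The element `j` of the rational quaternion algebra. -/
def qJ : ℍ[ℚ, -1, -1] := ⟨0, 0, 1, 0⟩

/-- The element `k` of the rational quaternion algebra. -/
def qK : ℍ[ℚ, -1, -1] := ⟨0, 0, 0, 1⟩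

/-- The Hurwitz quaternion `ζ = (1 + i + j + k)/2`. -/
def qZeta : ℍ[ℚ, -1, -1] := (2 : ℚ)⁻¹ • (1 + qI + qJ + qK)

/-- The ring of Hurwitz integers `M = ℤζ + ℤi + ℤj + ℤk` as a ℤ-submodule of `ℍ[ℚ,-1,-1]`. -/
def HurwitzM : Submodule ℤ ℍ[ℚ, -1, -1] :=
  Submodule.span ℤ ({qZeta, qI, qJ, qK} : Set ℍ[ℚ, -1, -1])

/-- The Lipschitz order `H_ℤ = ℤ + ℤi + ℤj + ℤk` as a ℤ-submodule of `ℍ[ℚ,-1,-1]`. -/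
def LipschitzHZ : Submodule ℤ ℍ[ℚ, -1, -1] :=
  Submodule.span ℤ ({1, qI, qJ, qK} : Set ℍ[ℚ, -1, -1])

-- `ℍ[R, -1, -1]` unfolds to `ℍ[R]`, but `IsDomain` is only registered for the latter.
theorem quaternion_mul_right_cancel₀ {R : Type*} [CommRing R] [LinearOrder R]
    [IsStrictOrderedRing R] {a b m : ℍ[R, -1, -1]} (hm : m ≠ 0) (h : a * m = b * m) : a = b :=
  mul_right_cancel₀ (M₀ := ℍ[R]) hm h

lemma re_mem_range_intCast_of_mem_lipschitzHZ {h : ℍ[ℚ, -1, -1]} (hh : h ∈ LipschitzHZ) :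
    h.re ∈ (Int.castAddHom ℚ).range := by
  induction hh using Submodule.span_induction with
  | mem x hx => rcases hx with rfl | rfl | rfl | rfl <;> simp [qI, qJ, qK]
  | zero => exact zero_mem _
  | add x y _ _ hx hy => exact add_mem hx hy
  | smul n x _ hx => exact zsmul_mem hx n

lemma qZeta_notMem_lipschitzHZ : qZeta ∉ LipschitzHZ := by
  intro h
  obtain ⟨n, hn⟩ := re_mem_range_intCast_of_mem_lipschitzHZ h
  have hre : qZeta.re = 2⁻¹ := by norm_num [qZeta, qI, qJ, qK]
  have : (2 * n : ℤ) = 1 := by exact_mod_cast (by simp_all : (2 * n : ℚ) = 1)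
  omega

lemma mul_ne_qZeta_mul {h m : ℍ[ℚ, -1, -1]} (hh : h ∈ LipschitzHZ) (hm : m ≠ 0) :
    h * m ≠ qZeta * m := fun e ↦
  qZeta_notMem_lipschitzHZ (quaternion_mul_right_cancel₀ hm e ▸ hh)

lemma qZeta_mem_hurwitzM : qZeta ∈ HurwitzM := Submodule.subset_span (by simp)
lemma qI_mem_hurwitzM : qI ∈ HurwitzM := Submodule.subset_span (by simp)
lemma qJ_mem_hurwitzM : qJ ∈ HurwitzM := Submodule.subset_span (by simp)
lemma qK_mem_hurwitzM : qK ∈ HurwitzM := Submodule.subset_span (by simp)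

lemma one_mem_hurwitzM : (1 : ℍ[ℚ, -1, -1]) ∈ HurwitzM := by
  have h : (1 : ℍ[ℚ, -1, -1]) = qZeta + qZeta - qI - qJ - qK := by
    ext <;> simp [qZeta, qI, qJ, qK] <;> norm_num
  rw [h]
  exact sub_mem (sub_mem (sub_mem (add_mem qZeta_mem_hurwitzM qZeta_mem_hurwitzM)
    qI_mem_hurwitzM) qJ_mem_hurwitzM) qK_mem_hurwitzM

lemma qZeta_mul_mem_hurwitzM {y : ℍ[ℚ, -1, -1]} (hy : y ∈ HurwitzM) : qZeta * y ∈ HurwitzM := by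
  have hζ : qZeta - 1 ∈ HurwitzM := sub_mem qZeta_mem_hurwitzM one_mem_hurwitzM
  induction hy using Submodule.span_induction with
  | mem x hx =>
    rcases hx with rfl | rfl | rfl | rfl
    · rw [show qZeta * qZeta = qZeta - 1 by ext <;> simp [qZeta, qI, qJ, qK] <;> norm_num]
      exact hζ
    · rw [show qZeta * qI = qZeta - 1 - qK by ext <;> simp [qZeta, qI, qJ, qK] <;> norm_num]
      exact sub_mem hζ qK_mem_hurwitzM
    · rw [show qZeta * qJ = qZeta - 1 - qI by ext <;> simp [qZeta, qI, qJ, qK] <;> norm_num]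
      exact sub_mem hζ qI_mem_hurwitzM
    · rw [show qZeta * qK = qZeta - 1 - qJ by ext <;> simp [qZeta, qI, qJ, qK] <;> norm_num]
      exact sub_mem hζ qJ_mem_hurwitzM
  | zero => simp
  | add x y _ _ hx hy => rw [mul_add]; exact add_mem hx hy
  | smul n x _ hx => rw [mul_smul_comm]; exact Submodule.smul_mem _ _ hx

/-- There is no `m ∈ M` such that `m, i·m, j·m, k·m` form a ℤ-basis of `M`;
in particular `M` is not a free module of rank one over the Lipschitz order
`H_ℤ = ℤ + ℤi + ℤj + ℤk` acting by left multiplication. -/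
theorem hurwitz_not_free_over_lipschitz :
    (¬ ∃ m ∈ HurwitzM,
        LinearIndependent ℤ ![m, qI * m, qJ * m, qK * m] ∧
        Submodule.span ℤ ({m, qI * m, qJ * m, qK * m} : Set ℍ[ℚ, -1, -1]) = HurwitzM) ∧
    (¬ ∃ m ∈ HurwitzM, ∀ y ∈ HurwitzM,
        ∃! h : ℍ[ℚ, -1, -1], h ∈ LipschitzHZ ∧ h * m = y) := by
  constructor
  · rintro ⟨m, hm, hli, hspan⟩
    have hζm : qZeta * m ∈ LipschitzHZ.map (LinearMap.mulRight ℤ m) := by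
      rw [LipschitzHZ, Submodule.map_span]
      simpa [Set.image_insert_eq, hspan] using qZeta_mul_mem_hurwitzM hm
    obtain ⟨h, hh, hhm⟩ := hζm
    exact mul_ne_qZeta_mul hh (by simpa using hli.ne_zero 0) hhm
  · rintro ⟨m, hm, hunique⟩
    have hm0 : m ≠ 0 := by
      rintro rfl
      obtain ⟨h, -, huniq⟩ := hunique 0 (zero_mem _)
      have h0 : (0 : ℍ[ℚ, -1, -1]) = h := huniq 0 ⟨zero_mem _, by simp⟩
      have h1 : (1 : ℍ[ℚ, -1, -1]) = h := huniq 1 ⟨Submodule.subset_span (by simp), by simp⟩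
      exact zero_ne_one (h0.trans h1.symm)
    obtain ⟨h, ⟨hh, hhm⟩, -⟩ := hunique _ (qZeta_mul_mem_hurwitzM hm)
    exact mul_ne_qZeta_mul hh hm0 hhm
end

section
/- Let L be the function field over ℂ of the genus-2 curve y² = x⁵ − x, i.e., L is the fraction field of ℂ[x,y]/(y² − x⁵ + x). Then there exist ℂ-algebra automorphisms σ and τ of L with σ(x) = −x, σ(y) = iy, τ(x) = x⁻¹, τ(y) = i·y·x⁻³ (where i ∈ ℂ is a fixed square root of −1), and these satisfy σ⁴ = 1, σ² = τ², σ² ≠ 1, and τστ⁻¹ = σ⁻¹; consequently the subgroup of Aut_ℂ(L) generated by σ and τ is isomorphic to the quaternion group Q of order 8, via σ ↦ i, τ ↦ j. -/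
/-!
Write `f = X⁵ - X`. A pair `(a, b)` in a field `L ⊇ ℂ` with `a` transcendental, `b ∉ ℂ(a)` and
`b² = f(a)` identifies `ℂ(a, b)` with the fraction field of `ℂ[X, Y]/(Y² - f)`: the kernel of
`X ↦ a, Y ↦ b` is generated by `Y² - f`, because a relation of degree `≤ 1` in `Y` would put `b`
in `ℂ(a)`. Hence any two such generating pairs of `L` are exchanged by a `ℂ`-automorphism.
Since `f(-x) = -f(x)` and `x⁶ f(1/x) = -f(x)`, the pairs `(-x, i y)` and `(1/x, i y / x³)` are
again of this kind, which gives `σ` and `τ`. Both square to the hyperelliptic involution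
`y ↦ -y`, and `σ τ σ = τ`; so `σ ↦ i`, `τ ↦ j` defines a homomorphism `Q₈ → Aut(L)`, which is
injective because every nontrivial subgroup of `Q₈` contains `-1 = i²`, and `σ² ≠ 1`.
-/

open Polynomial IntermediateField QuaternionGroup

noncomputable section

namespace IntermediateField

variable {K L : Type*} [Field K] [Field L] [Algebra K L]

theorem eq_top_of_adjoin_pair_eq_top {x y : L} (hgen : K⟮x, y⟯ = ⊤) {E : IntermediateField K L}
    (hx : x ∈ E) (hy : y ∈ E) : E = ⊤ :=
  eq_top_iff.2 <| hgen ▸ adjoin_le_iff.2 (Set.pair_subset hx hy)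

theorem algHom_ext_of_adjoin_pair_eq_top {L' : Type*} [Field L'] [Algebra K L'] {x y : L}
    (hgen : K⟮x, y⟯ = ⊤) {φ ψ : L →ₐ[K] L'} (hx : φ x = ψ x) (hy : φ y = ψ y) : φ = ψ := by
  have hrestrict : φ.comp (K⟮x, y⟯).val = ψ.comp (K⟮x, y⟯).val := by
    refine adjoin_algHom_ext K fun z hz => ?_
    rcases hz with rfl | rfl
    exacts [hx, hy]
  exact AlgHom.ext fun z => DFunLike.congr_fun hrestrict ⟨z, hgen ▸ mem_top⟩

theorem adjoin_simple_neg (x : L) : K⟮-x⟯ = K⟮x⟯ :=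
  le_antisymm (adjoin_simple_le_iff.2 (neg_mem (mem_adjoin_simple_self K x)))
    (adjoin_simple_le_iff.2 (by simpa using neg_mem (mem_adjoin_simple_self K (-x))))

theorem adjoin_simple_inv (x : L) : K⟮x⁻¹⟯ = K⟮x⟯ :=
  le_antisymm (adjoin_simple_le_iff.2 (inv_mem (mem_adjoin_simple_self K x)))
    (adjoin_simple_le_iff.2 (by simpa using inv_mem (mem_adjoin_simple_self K x⁻¹)))

theorem smul_mul_mem_iff {E : IntermediateField K L} {c : K} {y u : L} (hc : c ≠ 0) (hu : u ∈ E)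
    (hu0 : u ≠ 0) : c • (y * u) ∈ E ↔ y ∈ E := by
  refine ⟨fun h => ?_, fun hy => E.smul_mem (mul_mem hy hu)⟩
  have hy : y = c⁻¹ • (c • (y * u)) * u⁻¹ := by
    rw [inv_smul_smul₀ hc, mul_inv_cancel_right₀ hu0]
  rw [hy]
  exact mul_mem (E.smul_mem h) (inv_mem hu)

end IntermediateField

namespace HyperellipticCurve

variable {K L : Type*} [Field K] [Field L] [Algebra K L]

/-- `Y² - f(X)`, with `Y` the outer variable of `K[X][X]`. -/
def equation (f : K[X]) : K[X][X] := X ^ 2 - C f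

theorem monic_equation (f : K[X]) : (equation f).Monic := monic_X_pow_sub_C f two_ne_zero

theorem natDegree_equation (f : K[X]) : (equation f).natDegree = 2 := natDegree_X_pow_sub_C

abbrev CoordinateRing (f : K[X]) : Type _ := AdjoinRoot (equation f)

abbrev FunctionField (f : K[X]) [IsDomain (CoordinateRing f)] : Type _ :=
  FractionRing (CoordinateRing f)

def FunctionField.x (f : K[X]) [IsDomain (CoordinateRing f)] : FunctionField f :=
  algebraMap (CoordinateRing f) _ (AdjoinRoot.of _ X)

def FunctionField.y (f : K[X]) [IsDomain (CoordinateRing f)] : FunctionField f :=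
  algebraMap (CoordinateRing f) _ (AdjoinRoot.root _)

structure IsGenericPoint (f : K[X]) (a b : L) : Prop where
  transcendental : Transcendental K a
  not_mem_adjoin : b ∉ K⟮a⟯
  sq_eq : b ^ 2 = aeval a f

variable {f : K[X]} {a b : L}

theorem eval₂_equation (h : b ^ 2 = aeval a f) :
    (equation f).eval₂ (aeval a : K[X] →ₐ[K] L) b = 0 := by
  simp [equation, h]

def CoordinateRing.lift (h : b ^ 2 = aeval a f) : CoordinateRing f →ₐ[K] L :=
  AdjoinRoot.liftAlgHom _ (aeval a) b (eval₂_equation h)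

theorem CoordinateRing.lift_mk (h : b ^ 2 = aeval a f) (p : K[X][X]) :
    CoordinateRing.lift h (AdjoinRoot.mk _ p) = p.eval₂ (aeval a : K[X] →ₐ[K] L) b := by
  simp [CoordinateRing.lift]

namespace IsGenericPoint

variable (h : IsGenericPoint f a b)
include h

theorem left_ne_zero : a ≠ 0 := fun h0 => h.transcendental (h0 ▸ isAlgebraic_zero)

theorem right_ne_zero : b ≠ 0 := fun h0 => h.not_mem_adjoin (h0 ▸ zero_mem _)

theorem eq_zero_of_natDegree_le_one {p : K[X][X]} (hdeg : p.natDegree ≤ 1)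
    (hp : p.eval₂ (aeval a : K[X] →ₐ[K] L) b = 0) : p = 0 := by
  rw [eq_X_add_C_of_natDegree_le_one hdeg] at hp ⊢
  simp only [eval₂_add, eval₂_mul, eval₂_C, eval₂_X, AlgHom.coe_toRingHom] at hp
  have hmem (q : K[X]) : aeval a q ∈ K⟮a⟯ :=
    algebra_adjoin_le_adjoin K _ (aeval_mem_adjoin_singleton K a)
  have h1 : aeval a (p.coeff 1) = 0 := by
    by_contra hne
    refine h.not_mem_adjoin ?_
    rw [eq_div_of_mul_eq hne
      (by linear_combination hp : b * aeval a (p.coeff 1) = -aeval a (p.coeff 0))]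
    exact div_mem (neg_mem (hmem _)) (hmem _)
  rw [h1, zero_mul, zero_add] at hp
  rw [transcendental_iff.mp h.transcendental _ h1, transcendental_iff.mp h.transcendental _ hp]
  simp

theorem equation_dvd {p : K[X][X]} (hp : p.eval₂ (aeval a : K[X] →ₐ[K] L) b = 0) :
    equation f ∣ p := by
  rw [← modByMonic_eq_zero_iff_dvd (monic_equation f)]
  refine h.eq_zero_of_natDegree_le_one ?_ ?_
  · have := natDegree_modByMonic_lt p (monic_equation f)
      fun h1 => by simpa [h1] using natDegree_equation f
    rw [natDegree_equation] at this
    omega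
  · have := congrArg (eval₂ (aeval a : K[X] →ₐ[K] L) b) (modByMonic_add_div p (equation f))
    rwa [eval₂_add, eval₂_mul, eval₂_equation h.sq_eq, zero_mul, add_zero, hp] at this

theorem injective_lift : Function.Injective (CoordinateRing.lift h.sq_eq) := by
  refine (injective_iff_map_eq_zero _).2 fun z hz => ?_
  obtain ⟨p, rfl⟩ := AdjoinRoot.mk_surjective z
  rw [CoordinateRing.lift_mk] at hz
  exact AdjoinRoot.mk_eq_zero.2 (h.equation_dvd hz)

theorem isDomain : IsDomain (CoordinateRing f) :=
  h.injective_lift.isDomain (CoordinateRing.lift h.sq_eq : CoordinateRing f →+* L)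

variable [IsDomain (CoordinateRing f)]

def functionFieldHom : FunctionField f →ₐ[K] L := IsFractionRing.liftAlgHom h.injective_lift

@[simp]
theorem functionFieldHom_x : h.functionFieldHom (FunctionField.x f) = a := by
  simp [functionFieldHom, FunctionField.x, CoordinateRing.lift]

@[simp]
theorem functionFieldHom_y : h.functionFieldHom (FunctionField.y f) = b := by
  simp [functionFieldHom, FunctionField.y, CoordinateRing.lift]

theorem bijective_functionFieldHom (hgen : K⟮a, b⟯ = ⊤) :
    Function.Bijective h.functionFieldHom :=
  ⟨h.functionFieldHom.injective, AlgHom.fieldRange_eq_top.1 <|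
    eq_top_of_adjoin_pair_eq_top hgen ⟨_, h.functionFieldHom_x⟩ ⟨_, h.functionFieldHom_y⟩⟩

def functionFieldEquiv (hgen : K⟮a, b⟯ = ⊤) : FunctionField f ≃ₐ[K] L :=
  AlgEquiv.ofBijective _ (h.bijective_functionFieldHom hgen)

end IsGenericPoint

theorem IsGenericPoint.exists_algEquiv {L' : Type*} [Field L'] [Algebra K L'] {a' b' : L'}
    (h : IsGenericPoint f a b) (h' : IsGenericPoint f a' b') (hgen : K⟮a, b⟯ = ⊤)
    (hgen' : K⟮a', b'⟯ = ⊤) : ∃ φ : L ≃ₐ[K] L', φ a = a' ∧ φ b = b' := by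
  have := h.isDomain
  refine ⟨(h.functionFieldEquiv hgen).symm.trans (h'.functionFieldEquiv hgen'), ?_, ?_⟩
  · rw [AlgEquiv.trans_apply, (AlgEquiv.symm_apply_eq _).2 h.functionFieldHom_x.symm]
    exact h'.functionFieldHom_x
  · rw [AlgEquiv.trans_apply, (AlgEquiv.symm_apply_eq _).2 h.functionFieldHom_y.symm]
    exact h'.functionFieldHom_y

theorem IsGenericPoint.of_adjoin_simple_eq {x y u : L} {c : K} (h : IsGenericPoint f x y)
    (ha : Transcendental K a) (hax : K⟮a⟯ = K⟮x⟯) (hc : c ≠ 0) (hu : u ∈ K⟮x⟯) (hu0 : u ≠ 0)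
    (hsq : (c • (y * u)) ^ 2 = aeval a f) : IsGenericPoint f a (c • (y * u)) :=
  ⟨ha, hax ▸ (smul_mul_mem_iff hc hu hu0).not.2 h.not_mem_adjoin, hsq⟩

theorem adjoin_pair_eq_top_of_adjoin_simple_eq {x y u : L} {c : K} (hgen : K⟮x, y⟯ = ⊤)
    (hax : K⟮a⟯ = K⟮x⟯) (hc : c ≠ 0) (hu : u ∈ K⟮x⟯) (hu0 : u ≠ 0) :
    K⟮a, c • (y * u)⟯ = ⊤ := by
  have hle : K⟮x⟯ ≤ K⟮a, c • (y * u)⟯ :=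
    hax ▸ adjoin_simple_le_iff.2 (subset_adjoin _ _ (Set.mem_insert _ _))
  exact eq_top_of_adjoin_pair_eq_top hgen (hle (mem_adjoin_simple_self K x))
    ((smul_mul_mem_iff hc (hle hu) hu0).1 (subset_adjoin _ _ (by simp)))

end HyperellipticCurve

section QuaternionGroup

variable {G : Type*} [Group G] {σ τ : G}

theorem QuaternionGroup.closure_a_one_xa_zero (n : ℕ) [NeZero n] :
    Subgroup.closure {a 1, xa 0} = (⊤ : Subgroup (QuaternionGroup n)) := by
  have ha : a 1 ∈ Subgroup.closure {(a 1 : QuaternionGroup n), xa 0} :=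
    Subgroup.subset_closure (by simp)
  have hx : xa 0 ∈ Subgroup.closure {(a 1 : QuaternionGroup n), xa 0} :=
    Subgroup.subset_closure (by simp)
  refine eq_top_iff.2 fun g _ => ?_
  rcases g with i | i
  · rw [← ZMod.natCast_zmod_val i, ← a_one_pow]
    exact pow_mem ha _
  · rw [← zero_add i, ← xa_mul_a, ← ZMod.natCast_zmod_val i, ← a_one_pow]
    exact mul_mem hx (pow_mem ha _)

theorem QuaternionGroup.injective_of_map_a_two_ne_one (F : QuaternionGroup 2 →* G)
    (h : F (a 2) ≠ 1) : Function.Injective F := by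
  have hcases : ∀ g : QuaternionGroup 2, g = 1 ∨ g = a 2 ∨ g ^ 2 = a 2 := by decide
  refine (injective_iff_map_eq_one F).2 fun g hg => ?_
  rcases hcases g with rfl | rfl | hsq
  · rfl
  · exact absurd hg h
  · exact absurd (by rw [← hsq, map_pow, hg, one_pow]) h

theorem mul_eq_mul_pow_three_of_conj_eq_inv (hσ : σ ^ 4 = 1) (hconj : τ * σ * τ⁻¹ = σ⁻¹) :
    σ * τ = τ * σ ^ 3 := by
  calc σ * τ = (τ * σ * τ⁻¹)⁻¹ * τ := by rw [hconj, inv_inv]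
    _ = τ * σ⁻¹ := by group
    _ = τ * σ ^ 3 := by rw [inv_eq_of_mul_eq_one_right (by rw [← pow_succ', hσ])]

theorem pow_mul_eq_mul_pow_three_mul (hστ : σ * τ = τ * σ ^ 3) (m : ℕ) :
    σ ^ m * τ = τ * σ ^ (3 * m) := by
  induction m with
  | zero => simp
  | succ n ih =>
    rw [pow_succ, mul_assoc, hστ, ← mul_assoc, ih, mul_assoc, ← pow_add]
    ring_nf

def QuaternionGroup.lift (hσ : σ ^ 4 = 1) (hστ : σ ^ 2 = τ ^ 2) (hconj : τ * σ * τ⁻¹ = σ⁻¹) :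
    QuaternionGroup 2 →* G where
  toFun
    | .a i => σ ^ i.val
    | .xa i => τ * σ ^ i.val
  map_one' := pow_zero σ
  map_mul' g h := by
    have hmod : ∀ m n : ℕ, m % 4 = n % 4 → σ ^ m = σ ^ n := fun m n h => by
      rw [pow_eq_pow_mod m hσ, pow_eq_pow_mod n hσ, h]
    have hcomm := pow_mul_eq_mul_pow_three_mul (mul_eq_mul_pow_three_of_conj_eq_inv hσ hconj)
    rcases g with i | i <;> rcases h with j | j
    · show σ ^ (i + j).val = σ ^ i.val * σ ^ j.val
      rw [← pow_add]
      exact hmod _ _ (by revert i j; decide)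
    · show τ * σ ^ (j - i).val = σ ^ i.val * (τ * σ ^ j.val)
      rw [← mul_assoc, hcomm, mul_assoc, ← pow_add]
      exact congrArg _ (hmod _ _ (by revert i j; decide))
    · show τ * σ ^ (i + j).val = τ * σ ^ i.val * σ ^ j.val
      rw [mul_assoc, ← pow_add]
      exact congrArg _ (hmod _ _ (by revert i j; decide))
    · show σ ^ ((2 : ZMod (2 * 2)) + j - i).val = τ * σ ^ i.val * (τ * σ ^ j.val)
      rw [mul_assoc, ← mul_assoc (σ ^ i.val), hcomm, ← mul_assoc, ← mul_assoc, ← sq τ, ← hστ,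
        mul_assoc, ← pow_add, ← pow_add]
      exact hmod _ _ (by revert i j; decide)

theorem exists_mulEquiv_closure_quaternionGroup (hσ : σ ^ 4 = 1) (hστ : σ ^ 2 = τ ^ 2)
    (hσ2 : σ ^ 2 ≠ 1) (hconj : τ * σ * τ⁻¹ = σ⁻¹) :
    ∃ e : Subgroup.closure {σ, τ} ≃* QuaternionGroup 2,
      e ⟨σ, Subgroup.subset_closure (by simp)⟩ = a 1 ∧
      e ⟨τ, Subgroup.subset_closure (by simp)⟩ = xa 0 := by
  set F := QuaternionGroup.lift hσ hστ hconj
  have hFa : F (a 1) = σ := pow_one σ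
  have hFxa : F (xa 0) = τ := mul_eq_left.2 (pow_zero σ)
  have hinj : Function.Injective F := injective_of_map_a_two_ne_one F hσ2
  have hrange : F.range = Subgroup.closure {σ, τ} := by
    rw [MonoidHom.range_eq_map, ← closure_a_one_xa_zero, MonoidHom.map_closure, Set.image_pair,
      hFa, hFxa]
  refine ⟨((MonoidHom.ofInjective hinj).trans (MulEquiv.subgroupCongr hrange)).symm, ?_, ?_⟩ <;>
    rw [MulEquiv.symm_apply_eq] <;> ext
  exacts [hFa.symm, hFxa.symm]

end QuaternionGroup

open HyperellipticCurve

section GenusTwo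

variable {L : Type*} [Field L] [Algebra ℂ L] {x y : L}

theorem HyperellipticCurve.IsGenericPoint.neg_I_smul
    (h : IsGenericPoint (X ^ 5 - X : ℂ[X]) x y) :
    IsGenericPoint (X ^ 5 - X : ℂ[X]) (-x) (Complex.I • y) := by
  rw [← mul_one y]
  refine h.of_adjoin_simple_eq (fun ha => h.transcendental (by simpa using ha.neg))
    (adjoin_simple_neg x) Complex.I_ne_zero (one_mem _) one_ne_zero ?_
  simp [_root_.smul_pow, h.sq_eq]
  ring

theorem HyperellipticCurve.IsGenericPoint.inv_I_smul
    (h : IsGenericPoint (X ^ 5 - X : ℂ[X]) x y) :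
    IsGenericPoint (X ^ 5 - X : ℂ[X]) x⁻¹ (Complex.I • (y * x⁻¹ ^ 3)) := by
  refine h.of_adjoin_simple_eq (fun ha => h.transcendental (IsAlgebraic.inv_iff.1 ha))
    (adjoin_simple_inv x) Complex.I_ne_zero (pow_mem (inv_mem (mem_adjoin_simple_self ℂ x)) 3)
    (pow_ne_zero 3 (inv_ne_zero h.left_ne_zero)) ?_
  simp [_root_.smul_pow, mul_pow, h.sq_eq]
  field_simp
  ring

theorem adjoin_neg_I_smul_eq_top (hgen : ℂ⟮x, y⟯ = ⊤) : ℂ⟮-x, Complex.I • y⟯ = ⊤ := by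
  simpa only [mul_one] using adjoin_pair_eq_top_of_adjoin_simple_eq hgen (adjoin_simple_neg x)
    Complex.I_ne_zero (one_mem _) one_ne_zero

theorem adjoin_inv_I_smul_eq_top (hgen : ℂ⟮x, y⟯ = ⊤) (hx0 : x ≠ 0) :
    ℂ⟮x⁻¹, Complex.I • (y * x⁻¹ ^ 3)⟯ = ⊤ :=
  adjoin_pair_eq_top_of_adjoin_simple_eq hgen (adjoin_simple_inv x) Complex.I_ne_zero
    (pow_mem (inv_mem (mem_adjoin_simple_self ℂ x)) 3) (pow_ne_zero 3 (inv_ne_zero hx0))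

theorem quaternion_relations_of_apply_eq (hgen : ℂ⟮x, y⟯ = ⊤) (hx0 : x ≠ 0) (hy0 : y ≠ 0)
    {σ τ : L ≃ₐ[ℂ] L} (hσx : σ x = -x) (hσy : σ y = Complex.I • y) (hτx : τ x = x⁻¹)
    (hτy : τ y = Complex.I • (y * x⁻¹ ^ 3)) :
    σ ^ 4 = 1 ∧ σ ^ 2 = τ ^ 2 ∧ σ ^ 2 ≠ 1 ∧ τ * σ * τ⁻¹ = σ⁻¹ := by
  have ext {φ ψ : L ≃ₐ[ℂ] L} (hx : φ x = ψ x) (hy : φ y = ψ y) : φ = ψ :=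
    AlgEquiv.coe_toAlgHom_injective (algHom_ext_of_adjoin_pair_eq_top hgen hx hy)
  have hσ2x : (σ ^ 2) x = x := by simp [sq, hσx]
  have hσ2y : (σ ^ 2) y = -y := by simp [sq, hσy, smul_smul]
  have hτ2x : (τ ^ 2) x = x := by simp [sq, hτx]
  have hτ2y : (τ ^ 2) y = -y := by simp [sq, hτx, hτy, smul_smul, hx0]
  have hστσ : σ * τ * σ = τ := by
    refine ext (by simp [hσx, hτx]) ?_
    simp only [AlgEquiv.mul_apply, hσy, hτy, map_smul, map_mul, map_pow, map_inv₀, hσx, smul_smul]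
    rw [Complex.I_mul_I, inv_neg, Odd.neg_pow (by decide : Odd 3), mul_neg, smul_neg,
      neg_one_smul, neg_neg, smul_mul_assoc]
  refine ⟨?_, ext (by rw [hσ2x, hτ2x]) (by rw [hσ2y, hτ2y]), fun h1 => hy0 ?_, ?_⟩
  · have hσ4 : σ ^ 4 = σ ^ 2 * σ ^ 2 := by rw [← pow_add]
    refine ext ?_ ?_
    · rw [hσ4, AlgEquiv.mul_apply, hσ2x, hσ2x, AlgEquiv.one_apply]
    · rw [hσ4, AlgEquiv.mul_apply, hσ2y, map_neg, hσ2y, neg_neg, AlgEquiv.one_apply]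
  · have hy : -y = y := by rw [← hσ2y, h1, AlgEquiv.one_apply]
    exact (smul_eq_zero.1 ((two_smul ℂ y).trans (neg_eq_iff_add_eq_zero.1 hy))).resolve_left
      two_ne_zero
  · calc τ * σ * τ⁻¹ = σ⁻¹ * (σ * τ * σ) * τ⁻¹ := by group
      _ = σ⁻¹ := by rw [hστσ]; group

end GenusTwo

/-- Let `L` be the function field over ℂ of the genus-2 curve `y² = x⁵ − x`
(abstractly: `L` is a field extension of ℂ generated by elements `x, y` with `x`
transcendental over ℂ, `y² = x⁵ − x` and `y ∉ ℂ(x)`).  Then there exist ℂ-algebra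
automorphisms `σ, τ` of `L` with `σ(x) = −x`, `σ(y) = i·y`, `τ(x) = x⁻¹`,
`τ(y) = i·y·x⁻³`, satisfying `σ⁴ = 1`, `σ² = τ²`, `σ² ≠ 1` and `τστ⁻¹ = σ⁻¹`;
consequently the subgroup of `Aut_ℂ(L)` generated by `σ` and `τ` is isomorphic to the
quaternion group `Q₈` of order 8, via `σ ↦ i`, `τ ↦ j`. -/
theorem genus_two_curve_quaternionic_automorphisms
    (L : Type) [Field L] [Algebra ℂ L]
    (x y : L)
    (hx : Transcendental ℂ x)
    (hxy : y ^ 2 = x ^ 5 - x)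
    (hy : y ∉ IntermediateField.adjoin ℂ ({x} : Set L))
    (hgen : IntermediateField.adjoin ℂ ({x, y} : Set L) = ⊤) :
    ∃ σ τ : L ≃ₐ[ℂ] L,
      σ x = -x ∧ σ y = Complex.I • y ∧
      τ x = x⁻¹ ∧ τ y = Complex.I • (y * x⁻¹ ^ 3) ∧
      σ ^ 4 = 1 ∧ σ ^ 2 = τ ^ 2 ∧ σ ^ 2 ≠ 1 ∧ τ * σ * τ⁻¹ = σ⁻¹ ∧
      ∃ e : (Subgroup.closure ({σ, τ} : Set (L ≃ₐ[ℂ] L))) ≃* QuaternionGroup 2,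
        e ⟨σ, Subgroup.subset_closure (by simp)⟩ = QuaternionGroup.a 1 ∧
        e ⟨τ, Subgroup.subset_closure (by simp)⟩ = QuaternionGroup.xa 0 := by
  have hP : IsGenericPoint (X ^ 5 - X : ℂ[X]) x y := ⟨hx, hy, by simpa using hxy⟩
  obtain ⟨σ, hσx, hσy⟩ := hP.exists_algEquiv hP.neg_I_smul hgen (adjoin_neg_I_smul_eq_top hgen)
  obtain ⟨τ, hτx, hτy⟩ :=
    hP.exists_algEquiv hP.inv_I_smul hgen (adjoin_inv_I_smul_eq_top hgen hP.left_ne_zero)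
  obtain ⟨hσ4, hστ, hσ2, hconj⟩ :=
    quaternion_relations_of_apply_eq hgen hP.left_ne_zero hP.right_ne_zero hσx hσy hτx hτy
  exact ⟨σ, τ, hσx, hσy, hτx, hτy, hσ4, hστ, hσ2, hconj,
    exists_mulEquiv_closure_quaternionGroup hσ4 hστ hσ2 hconj⟩
end
end
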